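/- arXiv:1304.0664 — 2 statements merged into one kernel-verified Lean document; each statement's English description precedes it below -/
import Mathlib

section
/- Let ab be an edge in a finite simplicial complex K and let γ_{ab}: K → K' be the edge contraction of ab. If ab satisfies the p-link condition in K, then the induced homomorphism γ_{ab*}: H_p(K) → H_p(K') on p-th simplicial homology with integer coefficients is injective. -/
/-!
The contraction `γ` induces a chain map, and every chain of `K'` lifts to a chain of `K`. So if
`γ z = ∂c'` for a `p`-cycle `z`, lifting `c'` to `c` leaves the `p`-cycle `w = z - ∂c` with
`γ w = 0`, and it remains to show that `w` bounds. Now `γ w = 0` says that `w` vanishes on the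
simplices avoiding `a` and `b`, and that the coefficients of `bτ` and of its mirror `aτ` agree
up to sign. Hence whenever `bτ` occurs in `w`, so does `aτ`: then `τ ∈ Lk a ∩ Lk b`, so
`τ ∈ Lk ab` by the `p`-link condition, and `abτ ∈ K`. Subtracting from `w` the boundary of
the cone `u = Σ ± w(bτ) abτ` leaves a cycle that is still killed by `γ` and vanishes on every
`bτ`, hence is supported on simplices containing both `a` and `b`. Such a cycle is zero, since
the coefficient of `ρ \ a` in its boundary is `±` its coefficient at `ρ`.
-/

namespace ECpaper

variable {V : Type*} [LinearOrder V]

/-- A finite abstract simplicial complex on a (linearly ordered) vertex type `V`: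
a finite collection of nonempty finite subsets of `V` such that every nonempty
subset of a member is a member. -/
structure SC (V : Type*) [LinearOrder V] where
  faces : Finset (Finset V)
  nonempty_of_mem : ∀ σ ∈ faces, σ.Nonempty
  down_closed : ∀ σ ∈ faces, ∀ τ ⊆ σ, τ.Nonempty → τ ∈ faces

/-- The star of a set `X` of simplices: all simplices of `K` having some member
of `X` as a face. -/
def starOf (K : SC V) (X : Set (Finset V)) : Set (Finset V) :=
  {τ | τ ∈ K.faces ∧ ∃ σ ∈ X, σ ⊆ τ}

/-- The closure of a set `S` of simplices of `K`: all simplices of `S` together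
with all of their faces. -/
def closureOf (K : SC V) (S : Set (Finset V)) : Set (Finset V) :=
  {τ | τ ∈ K.faces ∧ ∃ σ ∈ S, τ ⊆ σ}

/-- The link of a set `X` of simplices: the simplices in the closure of the star of `X`
that do not belong to the star of the closure of `X`. -/
def linkOf (K : SC V) (X : Set (Finset V)) : Set (Finset V) :=
  closureOf K (starOf K X) \ starOf K (closureOf K X)

/-- The link of a vertex `a`. -/
def linkV (K : SC V) (a : V) : Set (Finset V) := linkOf K {{a}}

/-- The link of the edge `ab`. -/
def linkE (K : SC V) (a b : V) : Set (Finset V) := linkOf K {({a, b} : Finset V)}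

/-- The link condition for the edge `ab` in `K`: `Lk a ∩ Lk b = Lk ab`. -/
def LinkCond (K : SC V) (a b : V) : Prop :=
  linkV K a ∩ linkV K b = linkE K a b

/-- The `p`-link condition for the edge `ab` in `K`: either `p ≤ 0`, or `p > 0` and every
`(p-1)`-simplex (i.e. simplex of cardinality `p`) of `Lk a ∩ Lk b` lies in `Lk ab`. -/
def PLink (K : SC V) (a b : V) (p : ℤ) : Prop :=
  p ≤ 0 ∨ (0 < p ∧ ∀ ξ ∈ linkV K a ∩ linkV K b, (ξ.card : ℤ) = p → ξ ∈ linkE K a b)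

/-- The dimension of a simplicial complex. -/
def dimSC (K : SC V) : ℤ := ((K.faces.sup Finset.card : ℕ) : ℤ) - 1

/-- The vertex map of the contraction of the edge `ab`: identity everywhere except
that `b` is sent to `a`. -/
def contr (a b : V) : V → V := fun v => if v = b then a else v

/-- The ambient module of simplicial chains (over all dimensions) with `ℤ` coefficients;
the basis element corresponding to a finset is that simplex with its vertices in
increasing order. -/
abbrev FChain (V : Type*) [LinearOrder V] := Finset V →₀ ℤ

/-- The boundary of a single simplex (zero on vertices and on the empty set). -/
noncomputable def bndOf (σ : Finset V) : FChain V :=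
  if σ.card ≤ 1 then 0
  else ∑ v ∈ σ, ((-1 : ℤ) ^ ((σ.filter (fun x => x < v)).card)) •
        Finsupp.single (σ.erase v) (1 : ℤ)

/-- The simplicial boundary operator. -/
noncomputable def bnd : FChain V →ₗ[ℤ] FChain V :=
  Finsupp.lsum ℤ fun σ => LinearMap.toSpanSingleton ℤ (FChain V) (bndOf σ)

/-- The group of `p`-chains of `K`: the span of the `p`-simplices of `K`. -/
noncomputable def chains (K : SC V) (p : ℕ) : Submodule ℤ (FChain V) :=
  Submodule.span ℤ {x : FChain V | ∃ σ ∈ K.faces, σ.card = p + 1 ∧ x = Finsupp.single σ 1}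

/-- The group of `p`-cycles of `K`. -/
noncomputable def cycles (K : SC V) (p : ℕ) : Submodule ℤ (FChain V) :=
  chains K p ⊓ LinearMap.ker bnd

/-- The group of `p`-boundaries of `K`. -/
noncomputable def bdries (K : SC V) (p : ℕ) : Submodule ℤ (FChain V) :=
  (chains K (p + 1)).map bnd

/-- The `p`-th simplicial homology group of `K` with integer coefficients. -/
abbrev Hmlgy (K : SC V) (p : ℕ) : Type _ :=
  ↥(cycles K p) ⧸ ((bdries K p).comap (cycles K p).subtype)

/-- The homology class of a cycle. -/
noncomputable def HmlgyMk (K : SC V) (p : ℕ) (z : FChain V) (hz : z ∈ cycles K p) :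
    Hmlgy K p :=
  Submodule.Quotient.mk ⟨z, hz⟩

/-- The number of inversions in a list. -/
def inversions : List V → ℕ
  | [] => 0
  | x :: xs => (xs.filter (fun y => decide (y < x))).length + inversions xs

/-- Value of the chain map induced by a vertex map `f` on a single simplex: zero if `f` is
not injective on the simplex, and otherwise the image simplex signed by the permutation
rearranging the images of the vertices (in increasing order) into increasing order. -/
noncomputable def cmapOf (f : V → V) (σ : Finset V) : FChain V :=
  if (σ.image f).card = σ.card then
    ((-1 : ℤ) ^ inversions ((σ.sort (· ≤ ·)).map f)) • Finsupp.single (σ.image f) 1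
  else 0

/-- The chain map induced by a vertex map `f`. -/
noncomputable def cmap (f : V → V) : FChain V →ₗ[ℤ] FChain V :=
  Finsupp.lsum ℤ fun σ => LinearMap.toSpanSingleton ℤ (FChain V) (cmapOf f σ)

/-- Relative `p`-cycles of the pair `(L, L0)`: `p`-chains of `L` whose boundary is a
chain of `L0`. -/
noncomputable def relCycles (L L0 : SC V) (p : ℕ) : Submodule ℤ (FChain V) :=
  chains L p ⊓ Submodule.comap bnd (chains L0 (p - 1))

/-- Relative `p`-boundaries of the pair `(L, L0)`: boundaries of `(p+1)`-chains of `L`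
together with `p`-chains of `L0`. -/
noncomputable def relBdries (L L0 : SC V) (p : ℕ) : Submodule ℤ (FChain V) :=
  (chains L (p + 1)).map bnd ⊔ chains L0 p

/-- The `p`-th relative simplicial homology group of the pair `(L, L0)` with
integer coefficients. -/
abbrev RelHmlgy (L L0 : SC V) (p : ℕ) : Type _ :=
  ↥(relCycles L L0 p) ⧸ ((relBdries L L0 p).comap (relCycles L L0 p).subtype)

/-- The relative homology class of a relative cycle. -/
noncomputable def RelHmlgyMk (L L0 : SC V) (p : ℕ) (z : FChain V)
    (hz : z ∈ relCycles L L0 p) : RelHmlgy L L0 p :=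
  Submodule.Quotient.mk ⟨z, hz⟩

/-- A pure simplicial complex of dimension `p`: it is formed by a (nonempty) collection of
`p`-simplices and all their proper faces. -/
def IsPure (L : SC V) (p : ℕ) : Prop :=
  (∀ σ ∈ L.faces, ∃ τ ∈ L.faces, σ ⊆ τ ∧ τ.card = p + 1) ∧ ∃ σ ∈ L.faces, σ.card = p + 1

/-- An orientation of a complex: a choice of sign (`1` if the chosen orientation of the simplex
is the increasing order of the vertices, `-1` if the opposite) for each simplex. -/
def IsOrientation (K : SC V) (o : Finset V → ℤ) : Prop :=
  ∀ σ ∈ K.faces, o σ = 1 ∨ o σ = -1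

/-- Incidence sign (with respect to increasing vertex order) between a codimension-one
face `σ` and a simplex `τ`: `(-1)^i` where `i` is the position in `τ` of the vertex
missing in `σ`. -/
def incSign (σ τ : Finset V) : ℤ :=
  ∏ v ∈ τ \ σ, (-1 : ℤ) ^ ((τ.filter (fun x => x < v)).card)

/-- An edge of the graph `G_q(K)`: a pair of a `(q-1)`-simplex and an incident `q`-simplex. -/
def IsGEdge (K : SC V) (q : ℕ) (e : Finset V × Finset V) : Prop :=
  e.1 ∈ K.faces ∧ e.2 ∈ K.faces ∧ e.1.card = q ∧ e.2.card = q + 1 ∧ e.1 ⊆ e.2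

/-- A circuit of the graph `G_q(K)`: a set of edges of `G_q(K)` in which every vertex of the
graph has even degree. -/
def IsCircuit (K : SC V) (q : ℕ) (C : Finset (Finset V × Finset V)) : Prop :=
  (∀ e ∈ C, IsGEdge K q e) ∧
  ∀ ρ : Finset V,
    Even ((C.filter (fun e => e.1 = ρ)).card + (C.filter (fun e => e.2 = ρ)).card)

/-- Weight of an edge of `G_q(K)` under the orientation `o`. -/
def edgeWeight (o : Finset V → ℤ) (e : Finset V × Finset V) : ℤ :=
  o e.1 * o e.2 * incSign e.1 e.2

/-- Total weight of a circuit under the orientation `o`. -/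
def circWeight (o : Finset V → ℤ) (C : Finset (Finset V × Finset V)) : ℤ :=
  ∑ e ∈ C, edgeWeight o e

/-- A circuit is b-even if the sum of its edge weights is `0 mod 4`. -/
def BEven (o : Finset V → ℤ) (C : Finset (Finset V × Finset V)) : Prop :=
  circWeight o C % 4 = 0

/-- A circuit is b-odd if the sum of its edge weights is `2 mod 4`. -/
def BOdd (o : Finset V → ℤ) (C : Finset (Finset V × Finset V)) : Prop :=
  circWeight o C % 4 = 2

/-- A circuit `C` of `G_q(K)` has a chord: an edge of the graph not in `C` both of whose
endpoints are vertices of `C`. -/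
def HasChord (K : SC V) (q : ℕ) (C : Finset (Finset V × Finset V)) : Prop :=
  ∃ e : Finset V × Finset V, IsGEdge K q e ∧ e ∉ C ∧
    (∃ c ∈ C, c.1 = e.1) ∧ (∃ c ∈ C, c.2 = e.2)

/-- The boundary matrix `[∂_{p+1}]` of an oriented complex: rows indexed by `p`-simplices,
columns by `(p+1)`-simplices, entries the signed incidence numbers. -/
def boundaryMatrixSucc (K : SC V) (o : Finset V → ℤ) (p : ℕ) :
    Matrix {σ : Finset V // σ ∈ K.faces ∧ σ.card = p + 1}
      {τ : Finset V // τ ∈ K.faces ∧ τ.card = p + 2} ℤ :=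
  fun σ τ => if σ.1 ⊆ τ.1 then edgeWeight o (σ.1, τ.1) else 0

/-- `σ` is a collapsing simplex (w.r.t. contraction of `ab`). -/
def IsCollapsing (a b : V) (σ : Finset V) : Prop := a ∈ σ ∧ b ∈ σ

/-- `σ` and `σ'` are mirror simplices (w.r.t. contraction of `ab`). -/
def IsMirror (a b : V) (σ σ' : Finset V) : Prop :=
  a ∈ σ ∧ b ∈ σ' ∧ σ = insert a (σ'.erase b)

/-- The circuit `C` of `G_{p+1}(K)` contains (an edge incident to) a collapsing `p`-vertex. -/
def ContainsCollapsingLow (a b : V) (C : Finset (Finset V × Finset V)) : Prop :=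
  ∃ e ∈ C, IsCollapsing a b e.1

/-- The circuit `C` of `G_{p+1}(K)` contains a pair of `(p+1)`-vertices that are mirrors of
each other. -/
def ContainsMirrorHigh (a b : V) (C : Finset (Finset V × Finset V)) : Prop :=
  ∃ e ∈ C, ∃ e' ∈ C, IsMirror a b e.2 e'.2

def posSign (τ : Finset V) (v : V) : ℤ := (-1) ^ (τ.filter (· < v)).card

def numBetween (a b : V) (σ : Finset V) : ℕ :=
  (σ.filter fun x => min a b < x ∧ x < max a b).card

lemma exists_eq_insert_of_mem {σ : Finset V} {v : V} (hv : v ∈ σ) :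
    ∃ τ, v ∉ τ ∧ σ = insert v τ :=
  ⟨σ.erase v, Finset.notMem_erase v σ, (Finset.insert_erase hv).symm⟩

lemma insert_inj_of_notMem {v : V} {σ τ : Finset V} (hσ : v ∉ σ) (hτ : v ∉ τ) :
    insert v σ = insert v τ ↔ σ = τ :=
  ⟨fun h => by rw [← Finset.erase_insert hσ, h, Finset.erase_insert hτ], congrArg _⟩

section Signs

variable {a b : V}

lemma posSign_mul_self (τ : Finset V) (v : V) : posSign τ v * posSign τ v = 1 :=
  pow_mul_pow_eq_one _ (by norm_num)

lemma posSign_insert {τ : Finset V} {w : V} (hw : w ∉ τ) (v : V) :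
    posSign (insert w τ) v = posSign τ v * if w < v then -1 else 1 := by
  unfold posSign
  rw [Finset.filter_insert]
  split_ifs with h
  · rw [Finset.card_insert_of_notMem (fun h' => hw (Finset.mem_filter.1 h').1), pow_succ]
  · rw [mul_one]

lemma posSign_insert_self {τ : Finset V} {v : V} (hv : v ∉ τ) :
    posSign (insert v τ) v = posSign τ v := by
  rw [posSign_insert hv, if_neg (lt_irrefl v), mul_one]

lemma posSign_of_mem {τ : Finset V} {w : V} (hw : w ∈ τ) (v : V) :
    posSign τ v = posSign (τ.erase w) v * if w < v then -1 else 1 := by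
  conv_lhs => rw [← Finset.insert_erase hw]
  exact posSign_insert (Finset.notMem_erase w τ) v

lemma ite_lt_add_ite_lt {v w : V} (h : v ≠ w) :
    ((if v < w then -1 else 1) + if w < v then -1 else 1 : ℤ) = 0 := by
  rcases h.lt_or_gt with h | h <;> simp [h, h.not_gt]

lemma ite_lt_mul_self (v w : V) :
    ((if v < w then -1 else 1) * if v < w then -1 else 1 : ℤ) = 1 := by
  split_ifs <;> norm_num

lemma numBetween_comm (σ : Finset V) : numBetween a b σ = numBetween b a σ := by
  rw [numBetween, numBetween, min_comm, max_comm]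

lemma card_filter_lt_eq_add_numBetween {τ : Finset V} (hab : a < b) (ha : a ∉ τ) :
    (τ.filter (· < b)).card = (τ.filter (· < a)).card + numBetween a b τ := by
  rw [numBetween, min_eq_left hab.le, max_eq_right hab.le, ← Finset.card_union_of_disjoint
    (Finset.disjoint_filter.2 fun x _ h1 h2 => h1.asymm h2.1)]
  congr 1
  ext x
  simp only [Finset.mem_filter, Finset.mem_union]
  constructor
  · rintro ⟨hx, hxb⟩
    rcases lt_trichotomy x a with h | rfl | h
    exacts [Or.inl ⟨hx, h⟩, absurd hx ha, Or.inr ⟨hx, h, hxb⟩]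
  · rintro (⟨hx, h⟩ | ⟨hx, -, h⟩)
    exacts [⟨hx, h.trans hab⟩, ⟨hx, h⟩]

lemma posSign_mul_posSign {τ : Finset V} (hne : a ≠ b) (ha : a ∉ τ) (hb : b ∉ τ) :
    posSign τ a * posSign τ b = (-1) ^ numBetween a b τ := by
  wlog hab : a < b generalizing a b
  · rw [mul_comm, numBetween_comm]
    exact this hne.symm hb ha (hne.lt_or_gt.resolve_left hab)
  rw [posSign, posSign, card_filter_lt_eq_add_numBetween hab ha, pow_add, ← mul_assoc,
    pow_mul_pow_eq_one _ (by norm_num), one_mul]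

end Signs

section Contraction

variable {a b : V}

lemma contr_self : contr a b b = a := if_pos rfl

lemma contr_of_ne {v : V} (h : v ≠ b) : contr a b v = v := if_neg h

lemma map_contr_of_notMem {l : List V} (hb : b ∉ l) : l.map (contr a b) = l := by
  conv_rhs => rw [← List.map_id l]
  exact List.map_congr_left fun v hv => contr_of_ne (by rintro rfl; exact hb hv)

lemma image_contr_of_notMem {σ : Finset V} (hb : b ∉ σ) : σ.image (contr a b) = σ := by
  rw [Finset.image_congr (f := contr a b) (g := id) fun v hv => contr_of_ne (by
    rintro rfl; exact hb hv), Finset.image_id]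

lemma image_contr_insert {τ : Finset V} (hb : b ∉ τ) :
    (insert b τ).image (contr a b) = insert a τ := by
  rw [Finset.image_insert, contr_self, image_contr_of_notMem hb]

lemma inversions_eq_zero {l : List V} (h : l.Pairwise (· ≤ ·)) : inversions l = 0 := by
  induction l with
  | nil => rfl
  | cons x xs ih =>
    rw [List.pairwise_cons] at h
    rw [inversions, ih h.2, List.filter_eq_nil_iff.2 fun y hy => by simpa using h.1 y hy]
    rfl

lemma inversions_map_contr (hne : a ≠ b) {l : List V} (hl : l.Pairwise (· < ·)) (ha : a ∉ l)
    (hb : b ∈ l) :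
    inversions (l.map (contr a b)) = (l.filter fun y => min a b < y ∧ y < max a b).length := by
  induction l with
  | nil => simp at hb
  | cons x xs ih =>
    rw [List.pairwise_cons] at hl
    rw [List.mem_cons, not_or] at ha
    rw [List.map_cons, inversions, List.filter_cons]
    by_cases hxb : x = b
    · subst hxb
      have hxs : x ∉ xs := fun h => lt_irrefl x (hl.1 x h)
      rw [contr_self, map_contr_of_notMem hxs, inversions_eq_zero (hl.2.imp le_of_lt),
        if_neg (by grind), add_zero]
      congr 1
      exact List.filter_congr fun y hy => by have := hl.1 y hy; grind
    · have hbxs : b ∈ xs := (List.mem_cons.1 hb).resolve_left (Ne.symm hxb)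
      have hxb' : x < b := hl.1 b hbxs
      rw [contr_of_ne hxb, ih hl.2 ha.2 hbxs, List.filter_map, List.length_map,
        List.filter_congr (q := fun y => decide (y = b ∧ a < x)) fun y hy => by
          have := hl.1 y hy; simp only [Function.comp, contr]; grind]
      by_cases hax : a < x
      · simp only [hax, and_true]
        have hcount := List.count_eq_one_of_mem hl.2.nodup hbxs
        rw [List.count_eq_length_filter] at hcount
        simp only [beq_eq_decide] at hcount
        rw [if_pos (by grind), List.length_cons, hcount, add_comm]
      · rw [if_neg (by grind)]
        simp [hax]

end Contraction

section ChainMap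

variable {a b : V}

lemma bnd_single (σ : Finset V) (c : ℤ) : bnd (Finsupp.single σ c) = c • bndOf σ := by
  rw [bnd, Finsupp.lsum_single, LinearMap.toSpanSingleton_apply]

lemma cmap_single (f : V → V) (σ : Finset V) (c : ℤ) :
    cmap f (Finsupp.single σ c) = c • cmapOf f σ := by
  rw [cmap, Finsupp.lsum_single, LinearMap.toSpanSingleton_apply]

lemma bndOf_of_card_le_one {σ : Finset V} (h : σ.card ≤ 1) : bndOf σ = 0 := if_pos h

lemma bndOf_of_two_le_card {σ : Finset V} (h : 2 ≤ σ.card) :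
    bndOf σ = ∑ v ∈ σ, posSign σ v • Finsupp.single (σ.erase v) 1 := if_neg (by omega)

lemma bndOf_insert {τ : Finset V} {v : V} (hv : v ∉ τ) (hτ : τ.Nonempty) :
    bndOf (insert v τ) = posSign (insert v τ) v • Finsupp.single τ 1 +
      ∑ w ∈ τ, posSign (insert v τ) w • Finsupp.single (insert v (τ.erase w)) 1 := by
  rw [bndOf_of_two_le_card (by rw [Finset.card_insert_of_notMem hv]; have := hτ.card_pos; omega),
    Finset.sum_insert hv, Finset.erase_insert hv]
  congr 1
  refine Finset.sum_congr rfl fun w hw => ?_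
  rw [Finset.erase_insert_of_ne (by rintro rfl; exact hv hw)]

lemma bndOf_apply_of_notMem {τ ρ : Finset V} (h2 : 2 ≤ τ.card) {v : V} (hv : v ∈ τ)
    (hvρ : v ∉ ρ) : bndOf τ ρ = if τ.erase v = ρ then posSign τ v else 0 := by
  rw [bndOf_of_two_le_card h2, Finset.sum_apply', Finset.sum_eq_single_of_mem v hv]
  · simp [Finsupp.single_apply]
  · intro w _ hwv
    rw [Finsupp.smul_apply, Finsupp.single_apply, if_neg, smul_zero]
    rintro rfl
    exact hvρ (Finset.mem_erase.2 ⟨Ne.symm hwv, hv⟩)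

lemma length_filter_sort (σ : Finset V) (p : V → Prop) [DecidablePred p] :
    ((σ.sort (· ≤ ·)).filter (p ·)).length = (σ.filter p).card := by
  rw [← List.countP_eq_length_filter, ← Multiset.coe_countP, Finset.sort_eq,
    Multiset.countP_eq_card_filter]
  rfl

lemma cmapOf_contr_of_notMem {σ : Finset V} (hb : b ∉ σ) :
    cmapOf (contr a b) σ = Finsupp.single σ 1 := by
  rw [cmapOf, image_contr_of_notMem hb, if_pos rfl, map_contr_of_notMem (by simpa using hb),
    inversions_eq_zero (Finset.pairwise_sort _ _), pow_zero, one_smul]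

lemma cmapOf_contr_of_mem_of_mem (hne : a ≠ b) {σ : Finset V} (ha : a ∈ σ) (hb : b ∈ σ) :
    cmapOf (contr a b) σ = 0 := by
  rw [cmapOf, if_neg]
  rw [← Finset.insert_erase hb, image_contr_insert (Finset.notMem_erase b σ),
    Finset.insert_eq_self.2 (Finset.mem_erase.2 ⟨hne, ha⟩), Finset.card_insert_of_notMem
    (Finset.notMem_erase b σ)]
  omega

lemma cmapOf_contr_insert (hne : a ≠ b) {τ : Finset V} (ha : a ∉ τ) (hb : b ∉ τ) :
    cmapOf (contr a b) (insert b τ) =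
      (posSign τ a * posSign τ b) • Finsupp.single (insert a τ) 1 := by
  have hinv :
      inversions (((insert b τ).sort (· ≤ ·)).map (contr a b)) = numBetween a b τ := by
    rw [inversions_map_contr hne (Finset.sortedLT_sort _).pairwise (by simp [hne, ha])
      (by simp), length_filter_sort, numBetween, Finset.filter_insert, if_neg (by grind)]
  rw [cmapOf, image_contr_insert hb, Finset.card_insert_of_notMem ha,
    Finset.card_insert_of_notMem hb, if_pos rfl, hinv, posSign_mul_posSign hne ha hb]

lemma cmap_contr_bndOf_of_notMem {σ : Finset V} (hb : b ∉ σ) :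
    cmap (contr a b) (bndOf σ) = bndOf σ := by
  unfold bndOf
  split_ifs
  · exact map_zero _
  · rw [map_sum]
    refine Finset.sum_congr rfl fun v _ => ?_
    rw [map_smul, cmap_single, one_smul,
      cmapOf_contr_of_notMem fun h => hb (Finset.mem_of_mem_erase h)]

lemma cmap_contr_bndOf_insert_insert (hne : a ≠ b) {τ : Finset V} (ha : a ∉ τ) (hb : b ∉ τ) :
    cmap (contr a b) (bndOf (insert a (insert b τ))) = 0 := by
  have ha' : a ∉ insert b τ := by simp [hne, ha]
  rw [bndOf_insert ha' (Finset.insert_nonempty _ _), Finset.sum_insert hb,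
    Finset.erase_insert hb, map_add, map_add, map_sum, Finset.sum_eq_zero, add_zero]
  · rw [map_smul, map_smul, cmap_single, cmap_single, one_smul, one_smul,
      cmapOf_contr_insert hne ha hb, cmapOf_contr_of_notMem (by simp [hne.symm, hb]), smul_smul,
      ← add_smul, posSign_insert_self ha', posSign_insert hb, posSign_insert ha',
      posSign_insert_self hb]
    convert zero_smul ℤ _
    linear_combination (posSign τ b * (if b < a then -1 else 1)) * posSign_mul_self τ a +
      posSign τ b * ite_lt_add_ite_lt hne.symm
  · intro w hw
    have hbw : b ≠ w := by rintro rfl; exact hb hw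
    rw [map_smul, cmap_single, cmapOf_contr_of_mem_of_mem hne (Finset.mem_insert_self _ _)
      (by simp [hbw]), smul_zero, smul_zero]

lemma bnd_cmapOf_contr_insert (hne : a ≠ b) {τ : Finset V} (ha : a ∉ τ) (hb : b ∉ τ) :
    bnd (cmapOf (contr a b) (insert b τ)) = cmap (contr a b) (bndOf (insert b τ)) := by
  rw [cmapOf_contr_insert hne ha hb, map_smul, bnd_single, one_smul]
  rcases τ.eq_empty_or_nonempty with rfl | hτ
  · simp [bndOf_of_card_le_one]
  rw [bndOf_insert ha hτ, bndOf_insert hb hτ, map_add, map_sum, smul_add, Finset.smul_sum]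
  congr 1
  · rw [map_smul, cmap_single, one_smul, cmapOf_contr_of_notMem hb, smul_smul,
      posSign_insert_self ha, posSign_insert_self hb]
    congr 1
    linear_combination posSign τ b * posSign_mul_self τ a
  · refine Finset.sum_congr rfl fun w hw => ?_
    have haw : w ≠ a := by rintro rfl; exact ha hw
    have hbw : w ≠ b := by rintro rfl; exact hb hw
    rw [map_smul, cmap_single, one_smul, cmapOf_contr_insert hne
      (fun h => ha (Finset.mem_of_mem_erase h)) (fun h => hb (Finset.mem_of_mem_erase h)),
      smul_smul, smul_smul, posSign_of_mem hw a, posSign_of_mem hw b, posSign_insert ha w,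
      posSign_insert hb w]
    congr 1
    linear_combination posSign (τ.erase w) a * posSign (τ.erase w) b * posSign τ w *
      ((if w < a then -1 else 1) * (if w < b then -1 else 1) * ite_lt_add_ite_lt haw -
        (if w < b then -1 else 1) * ite_lt_mul_self w a - ite_lt_add_ite_lt hbw)

lemma bnd_cmapOf_contr (hne : a ≠ b) (σ : Finset V) :
    bnd (cmapOf (contr a b) σ) = cmap (contr a b) (bndOf σ) := by
  by_cases hb : b ∈ σ
  · obtain ⟨τ, hbτ, rfl⟩ := exists_eq_insert_of_mem hb
    by_cases ha : a ∈ τ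
    · obtain ⟨ρ, haρ, rfl⟩ := exists_eq_insert_of_mem ha
      have hbρ : b ∉ ρ := fun h => hbτ (Finset.mem_insert_of_mem h)
      rw [Finset.insert_comm, cmapOf_contr_of_mem_of_mem hne (Finset.mem_insert_self _ _)
        (Finset.mem_insert_of_mem (Finset.mem_insert_self _ _)), map_zero,
        cmap_contr_bndOf_insert_insert hne haρ hbρ]
    · exact bnd_cmapOf_contr_insert hne ha hbτ
  · rw [cmapOf_contr_of_notMem hb, bnd_single, one_smul, cmap_contr_bndOf_of_notMem hb]

lemma bnd_cmap_contr (hne : a ≠ b) (x : FChain V) :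
    bnd (cmap (contr a b) x) = cmap (contr a b) (bnd x) := by
  induction x using Finsupp.induction_linear with
  | zero => simp
  | add x y hx hy => simp only [map_add, hx, hy]
  | single σ c => rw [cmap_single, bnd_single, map_smul, map_smul, bnd_cmapOf_contr hne]

lemma posSign_mul_posSign_erase_add {σ : Finset V} {v w : V} (hv : v ∈ σ) (hw : w ∈ σ)
    (hvw : v ≠ w) :
    posSign σ v * posSign (σ.erase v) w + posSign σ w * posSign (σ.erase w) v = 0 := by
  rw [posSign_of_mem hw v, posSign_of_mem hv w]
  linear_combination posSign (σ.erase w) v * posSign (σ.erase v) w * ite_lt_add_ite_lt hvw.symm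

lemma bnd_bndOf (σ : Finset V) : bnd (bndOf σ) = 0 := by
  by_cases h1 : σ.card ≤ 1
  · rw [bndOf_of_card_le_one h1, map_zero]
  by_cases h2 : σ.card = 2
  · rw [bndOf_of_two_le_card (by omega), map_sum]
    refine Finset.sum_eq_zero fun v hv => ?_
    rw [map_smul, bnd_single, bndOf_of_card_le_one (by rw [Finset.card_erase_of_mem hv]; omega),
      smul_zero, smul_zero]
  have hexp : bnd (bndOf σ) = ∑ vw ∈ σ.sigma fun v => σ.erase v,
      (posSign σ vw.1 * posSign (σ.erase vw.1) vw.2) •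
        Finsupp.single ((σ.erase vw.1).erase vw.2) 1 := by
    rw [Finset.sum_sigma, bndOf_of_two_le_card (by omega), map_sum]
    refine Finset.sum_congr rfl fun v hv => ?_
    rw [map_smul, bnd_single, one_smul, bndOf_of_two_le_card (by
      rw [Finset.card_erase_of_mem hv]; omega), Finset.smul_sum]
    simp only [smul_smul]
  rw [hexp]
  refine Finset.sum_involution (fun vw _ => ⟨vw.2, vw.1⟩) ?_ ?_ ?_ ?_
  · rintro ⟨v, w⟩ hvw
    simp only [Finset.mem_sigma, Finset.mem_erase] at hvw
    rw [Finset.erase_right_comm, ← add_smul,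
      posSign_mul_posSign_erase_add hvw.1 hvw.2.2 (Ne.symm hvw.2.1), zero_smul]
  · rintro ⟨v, w⟩ hvw - h
    simp only [Finset.mem_sigma, Finset.mem_erase] at hvw
    exact hvw.2.1 (congrArg Sigma.fst h)
  · rintro ⟨v, w⟩ hvw
    simp only [Finset.mem_sigma, Finset.mem_erase] at hvw ⊢
    exact ⟨hvw.2.2, Ne.symm hvw.2.1, hvw.1⟩
  · intros
    rfl

lemma bnd_bnd (x : FChain V) : bnd (bnd x) = 0 := by
  induction x using Finsupp.induction_linear with
  | zero => simp
  | add x y hx hy => rw [map_add, map_add, hx, hy, add_zero]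
  | single σ c => rw [bnd_single, map_smul, bnd_bndOf, smul_zero]

end ChainMap

section Chains

variable {K K' : SC V} {a b : V}

lemma mem_chains_iff {p : ℕ} {x : FChain V} :
    x ∈ chains K p ↔ ∀ σ ∈ x.support, σ ∈ K.faces ∧ σ.card = p + 1 := by
  have : chains K p = Finsupp.supported ℤ ℤ {σ | σ ∈ K.faces ∧ σ.card = p + 1} := by
    rw [chains, Finsupp.supported_eq_span_single]
    congr 1
    ext x
    simp only [Set.mem_ofPred_eq, Set.mem_image, and_assoc, eq_comm]
  rw [this, Finsupp.mem_supported]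
  rfl

lemma single_mem_chains {p : ℕ} {σ : Finset V} (hσ : σ ∈ K.faces)
    (hc : σ.card = p + 1) (c : ℤ) : Finsupp.single σ c ∈ chains K p :=
  mem_chains_iff.2 fun _ hτ =>
    Finset.mem_singleton.1 (Finsupp.support_single_subset hτ) ▸ ⟨hσ, hc⟩

lemma bndOf_mem_chains {p : ℕ} {σ : Finset V} (hσ : σ ∈ K.faces)
    (hc : σ.card = p + 2) : bndOf σ ∈ chains K p := by
  rw [bndOf_of_two_le_card (by omega)]
  refine Submodule.sum_mem _ fun v hv => Submodule.smul_mem _ _ (single_mem_chains ?_ ?_ 1)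
  · refine K.down_closed σ hσ _ (Finset.erase_subset _ _) ?_
    rw [← Finset.card_pos, Finset.card_erase_of_mem hv]
    omega
  · rw [Finset.card_erase_of_mem hv]
    omega

lemma bdries_le_chains (p : ℕ) : bdries K p ≤ chains K p := by
  rw [bdries, chains, Submodule.map_span_le]
  rintro _ ⟨σ, hσ, hc, rfl⟩
  rw [bnd_single, one_smul]
  exact bndOf_mem_chains hσ hc

lemma cmapOf_contr_mem_chains (hne : a ≠ b)
    (hK' : K'.faces = K.faces.image (Finset.image (contr a b))) {q : ℕ} {σ : Finset V}
    (hσ : σ ∈ K.faces) (hc : σ.card = q + 1) :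
    cmapOf (contr a b) σ ∈ chains K' q := by
  have himg : σ.image (contr a b) ∈ K'.faces := hK' ▸ Finset.mem_image_of_mem _ hσ
  by_cases hb : b ∈ σ
  · obtain ⟨τ, hbτ, rfl⟩ := exists_eq_insert_of_mem hb
    by_cases ha : a ∈ τ
    · rw [cmapOf_contr_of_mem_of_mem hne (Finset.mem_insert_of_mem ha)
        (Finset.mem_insert_self _ _)]
      exact Submodule.zero_mem _
    · rw [image_contr_insert hbτ] at himg
      rw [cmapOf_contr_insert hne ha hbτ]
      refine Submodule.smul_mem _ _ (single_mem_chains himg ?_ 1)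
      rwa [Finset.card_insert_of_notMem ha, ← Finset.card_insert_of_notMem hbτ]
  · rw [image_contr_of_notMem hb] at himg
    rw [cmapOf_contr_of_notMem hb]
    exact single_mem_chains himg hc 1

lemma single_image_contr_mem_map_chains (hne : a ≠ b) {q : ℕ} {σ : Finset V}
    (hσ : σ ∈ K.faces) (hc : (σ.image (contr a b)).card = q + 1) :
    Finsupp.single (σ.image (contr a b)) 1 ∈ (chains K q).map (cmap (contr a b)) := by
  by_cases hb : b ∈ σ
  · obtain ⟨τ, hbτ, rfl⟩ := exists_eq_insert_of_mem hb
    rw [image_contr_insert hbτ] at hc ⊢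
    by_cases ha : a ∈ τ
    · rw [Finset.insert_eq_of_mem ha] at hc ⊢
      have hτ : τ ∈ K.faces := K.down_closed _ hσ τ (Finset.subset_insert _ _)
        (Finset.card_pos.1 (by omega))
      refine ⟨Finsupp.single τ 1, single_mem_chains hτ hc 1, ?_⟩
      rw [cmap_single, one_smul, cmapOf_contr_of_notMem hbτ]
    · refine ⟨(posSign τ a * posSign τ b) • Finsupp.single (insert b τ) 1,
        Submodule.smul_mem _ _ (single_mem_chains hσ ?_ 1), ?_⟩
      · rwa [Finset.card_insert_of_notMem hbτ, ← Finset.card_insert_of_notMem ha]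
      · rw [map_smul, cmap_single, one_smul, cmapOf_contr_insert hne ha hbτ, smul_smul,
          mul_mul_mul_comm, posSign_mul_self, posSign_mul_self, one_mul, one_smul]
  · rw [image_contr_of_notMem hb] at hc ⊢
    exact ⟨Finsupp.single σ 1, single_mem_chains hσ hc 1,
      by rw [cmap_single, one_smul, cmapOf_contr_of_notMem hb]⟩

lemma map_cmap_contr_chains (hne : a ≠ b)
    (hK' : K'.faces = K.faces.image (Finset.image (contr a b))) (q : ℕ) :
    (chains K q).map (cmap (contr a b)) = chains K' q := by
  refine le_antisymm ((Submodule.map_span_le _ _ _).2 ?_) (Submodule.span_le.2 ?_)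
  · rintro _ ⟨σ, hσ, hc, rfl⟩
    rw [cmap_single, one_smul]
    exact cmapOf_contr_mem_chains hne hK' hσ hc
  · rintro _ ⟨σ', hσ', hc, rfl⟩
    rw [hK', Finset.mem_image] at hσ'
    obtain ⟨σ, hσ, rfl⟩ := hσ'
    exact single_image_contr_mem_map_chains hne hσ hc

lemma cmap_contr_mem_cycles (hne : a ≠ b)
    (hK' : K'.faces = K.faces.image (Finset.image (contr a b))) {p : ℕ} {z : FChain V}
    (hz : z ∈ cycles K p) :
    cmap (contr a b) z ∈ cycles K' p := by
  refine ⟨map_cmap_contr_chains hne hK' p ▸ Submodule.mem_map_of_mem hz.1, ?_⟩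
  rw [SetLike.mem_coe, LinearMap.mem_ker, bnd_cmap_contr hne, LinearMap.mem_ker.1 hz.2, map_zero]

end Chains

section Link

variable {K : SC V} {a b : V}

lemma mem_linkV_of_insert_mem {c : V} {ξ : Finset V} (hξ : ξ.Nonempty) (hc : c ∉ ξ)
    (h : insert c ξ ∈ K.faces) : ξ ∈ linkV K c := by
  refine ⟨⟨K.down_closed _ h ξ (Finset.subset_insert c ξ) hξ, insert c ξ,
    ⟨h, {c}, rfl, by simp⟩, Finset.subset_insert c ξ⟩, ?_⟩
  rintro ⟨-, σ, ⟨hσ, _, rfl, hσc⟩, hσξ⟩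
  obtain ⟨x, hx⟩ := K.nonempty_of_mem σ hσ
  exact hc (Finset.mem_singleton.1 (hσc hx) ▸ hσξ hx)

lemma insert_insert_mem_of_mem_linkE {ξ : Finset V} (h : ξ ∈ linkE K a b) :
    insert a (insert b ξ) ∈ K.faces := by
  obtain ⟨⟨-, σ, ⟨hσ, _, rfl, habσ⟩, hξσ⟩, -⟩ := h
  refine K.down_closed σ hσ _ ?_ (Finset.insert_nonempty _ _)
  rw [Finset.insert_subset_iff] at habσ
  rw [Finset.insert_subset_iff, Finset.insert_subset_iff]
  exact ⟨habσ.1, Finset.singleton_subset_iff.1 habσ.2, hξσ⟩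

lemma insert_insert_mem_of_pLink (hab : ({a, b} : Finset V) ∈ K.faces) {p : ℕ}
    (hpl : PLink K a b p) {ξ : Finset V} (hc : ξ.card = p) (ha : a ∉ ξ) (hb : b ∉ ξ)
    (haξ : insert a ξ ∈ K.faces) (hbξ : insert b ξ ∈ K.faces) :
    insert a (insert b ξ) ∈ K.faces := by
  rcases ξ.eq_empty_or_nonempty with rfl | hξ
  · simpa using hab
  rcases hpl with hp | ⟨-, hlink⟩
  · have := hξ.card_pos
    omega
  exact insert_insert_mem_of_mem_linkE (hlink ξ ⟨mem_linkV_of_insert_mem hξ ha haξ,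
    mem_linkV_of_insert_mem hξ hb hbξ⟩ (by rw [hc]))

end Link

section Kernel

variable {a b : V}

lemma cmap_contr_apply_of_notMem (hne : a ≠ b) (x : FChain V) {ρ : Finset V} (ha : a ∉ ρ)
    (hb : b ∉ ρ) : cmap (contr a b) x ρ = x ρ := by
  induction x using Finsupp.induction_linear with
  | zero => simp
  | add x y hx hy => simp only [map_add, Finsupp.add_apply, hx, hy]
  | single σ c =>
    rw [cmap_single, Finsupp.smul_apply, Finsupp.single_apply, smul_eq_mul]
    by_cases hbσ : b ∈ σ
    · obtain ⟨τ, hbτ, rfl⟩ := exists_eq_insert_of_mem hbσ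
      rw [if_neg (by rintro rfl; exact hb (Finset.mem_insert_self _ _))]
      by_cases haτ : a ∈ τ
      · rw [cmapOf_contr_of_mem_of_mem hne (Finset.mem_insert_of_mem haτ)
          (Finset.mem_insert_self _ _), Finsupp.coe_zero, Pi.zero_apply, mul_zero]
      · rw [cmapOf_contr_insert hne haτ hbτ, Finsupp.smul_apply, Finsupp.single_apply,
          if_neg (by rintro rfl; exact ha (Finset.mem_insert_self _ _)), smul_zero, mul_zero]
    · rw [cmapOf_contr_of_notMem hbσ, Finsupp.single_apply]
      split_ifs <;> simp

lemma cmap_contr_apply_insert (hne : a ≠ b) (x : FChain V) {τ : Finset V} (ha : a ∉ τ)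
    (hb : b ∉ τ) : cmap (contr a b) x (insert a τ) =
      x (insert a τ) + posSign τ a * posSign τ b * x (insert b τ) := by
  induction x using Finsupp.induction_linear with
  | zero => simp
  | add x y hx hy => simp only [map_add, Finsupp.add_apply, hx, hy]; ring
  | single σ c =>
    rw [cmap_single, Finsupp.smul_apply, smul_eq_mul]
    by_cases hbσ : b ∈ σ
    · obtain ⟨ρ, hbρ, rfl⟩ := exists_eq_insert_of_mem hbσ
      rw [Finsupp.single_eq_of_ne (by grind), zero_add]
      by_cases hρτ : ρ = τ
      · subst hρτ
        rw [cmapOf_contr_insert hne ha hbρ, Finsupp.smul_apply, Finsupp.single_eq_same,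
          Finsupp.single_eq_same, smul_eq_mul, mul_one, mul_comm]
      rw [Finsupp.single_eq_of_ne (by rwa [Ne, insert_inj_of_notMem hb hbρ, eq_comm]), mul_zero]
      by_cases haρ : a ∈ ρ
      · rw [cmapOf_contr_of_mem_of_mem hne (Finset.mem_insert_of_mem haρ)
          (Finset.mem_insert_self _ _), Finsupp.coe_zero, Pi.zero_apply, mul_zero]
      · rw [cmapOf_contr_insert hne haρ hbρ, Finsupp.smul_apply, Finsupp.single_eq_of_ne
          (by rwa [Ne, insert_inj_of_notMem ha haρ, eq_comm]), smul_zero, mul_zero]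
    · rw [cmapOf_contr_of_notMem hbσ,
        Finsupp.single_eq_of_ne (a := σ) (a' := insert b τ) (by grind), mul_zero, add_zero,
        Finsupp.single_apply, Finsupp.single_apply]
      split_ifs <;> simp

lemma apply_eq_zero_of_cmap_contr_eq_zero (hne : a ≠ b) {r : FChain V}
    (hγ : cmap (contr a b) r = 0) (hB : ∀ τ, a ∉ τ → b ∉ τ → r (insert b τ) = 0)
    {ρ : Finset V} (hρ : ¬(a ∈ ρ ∧ b ∈ ρ)) : r ρ = 0 := by
  by_cases hbρ : b ∈ ρ
  · obtain ⟨τ, hbτ, rfl⟩ := exists_eq_insert_of_mem hbρ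
    exact hB τ (fun h => hρ ⟨Finset.mem_insert_of_mem h, Finset.mem_insert_self _ _⟩) hbτ
  by_cases haρ : a ∈ ρ
  · obtain ⟨τ, haτ, rfl⟩ := exists_eq_insert_of_mem haρ
    have hbτ : b ∉ τ := fun h => hbρ (Finset.mem_insert_of_mem h)
    have := cmap_contr_apply_insert hne r haτ hbτ
    rwa [hγ, hB τ haτ hbτ, mul_zero, add_zero, Finsupp.coe_zero, Pi.zero_apply, eq_comm] at this
  · rw [← cmap_contr_apply_of_notMem hne r haρ hbρ, hγ, Finsupp.coe_zero, Pi.zero_apply]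

lemma apply_insert_ne_zero_of_cmap_contr_eq_zero (hne : a ≠ b) {w : FChain V}
    (hγ : cmap (contr a b) w = 0) {τ : Finset V} (ha : a ∉ τ) (hb : b ∉ τ)
    (h : w (insert b τ) ≠ 0) : w (insert a τ) ≠ 0 := by
  intro h0
  have := cmap_contr_apply_insert hne w ha hb
  rw [hγ, h0, zero_add, Finsupp.coe_zero, Pi.zero_apply, eq_comm, mul_eq_zero] at this
  exact this.elim (mul_ne_zero (pow_ne_zero _ (by norm_num)) (pow_ne_zero _ (by norm_num))) h

lemma bnd_apply (x : FChain V) (ρ : Finset V) :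
    bnd x ρ = ∑ σ ∈ x.support, x σ * bndOf σ ρ := by
  rw [bnd, Finsupp.lsum_apply, Finsupp.sum, Finset.sum_apply']
  simp only [LinearMap.toSpanSingleton_apply, Finsupp.smul_apply, smul_eq_mul]

/-- The sum is the cone from `a` over `∑ σ ∈ B, f σ • [σ]`. -/
lemma bnd_sum_insert_apply {B : Finset (Finset V)} (hB : ∀ σ ∈ B, a ∉ σ ∧ σ.Nonempty)
    (f : Finset V → ℤ) {ρ : Finset V} (hρ : a ∉ ρ) :
    bnd (∑ σ ∈ B, (f σ * posSign σ a) • Finsupp.single (insert a σ) 1) ρ =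
      if ρ ∈ B then f ρ else 0 := by
  rw [map_sum, Finset.sum_apply']
  have hterm : ∀ σ ∈ B, bnd ((f σ * posSign σ a) • Finsupp.single (insert a σ) 1) ρ =
      if σ = ρ then f ρ else 0 := by
    intro σ hσ
    obtain ⟨haσ, hσ⟩ := hB σ hσ
    rw [map_smul, bnd_single, one_smul, Finsupp.smul_apply, bndOf_apply_of_notMem
      (by rw [Finset.card_insert_of_notMem haσ]; have := hσ.card_pos; omega)
      (Finset.mem_insert_self a σ) hρ, Finset.erase_insert haσ, posSign_insert_self haσ]
    split_ifs with h
    · rw [← h, smul_eq_mul, mul_assoc, posSign_mul_self, mul_one]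
    · exact smul_zero _
  rw [Finset.sum_congr rfl hterm, Finset.sum_ite_eq']

lemma eq_zero_of_bnd_eq_zero {r : FChain V} (h : ∀ σ ∈ r.support, a ∈ σ ∧ 2 ≤ σ.card)
    (hr : bnd r = 0) : r = 0 := by
  ext ρ
  by_contra hρ
  obtain ⟨ha, h2⟩ := h ρ (Finsupp.mem_support_iff.2 hρ)
  have hcoeff : bnd r (ρ.erase a) = r ρ * posSign ρ a := by
    rw [bnd_apply, Finset.sum_eq_single ρ]
    · rw [bndOf_apply_of_notMem h2 ha (Finset.notMem_erase a ρ), if_pos rfl]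
    · intro σ hσ hσρ
      obtain ⟨haσ, h2σ⟩ := h σ hσ
      rw [bndOf_apply_of_notMem h2σ haσ (Finset.notMem_erase a ρ), if_neg, mul_zero]
      intro he
      rw [← Finset.insert_erase haσ, he, Finset.insert_erase ha] at hσρ
      exact hσρ rfl
    · intro hρ'
      exact absurd (Finsupp.notMem_support_iff.1 hρ') hρ
  rw [hr, Finsupp.coe_zero, Pi.zero_apply, eq_comm, mul_eq_zero] at hcoeff
  exact hcoeff.elim hρ (pow_ne_zero _ (by norm_num))

end Kernel

section Homology

variable {K K' : SC V} {a b : V}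

lemma exists_bnd_eq_of_cmap_contr_eq_zero (hne : a ≠ b) (hab : ({a, b} : Finset V) ∈ K.faces)
    {p : ℕ} (hpl : PLink K a b p) {w : FChain V} (hw : w ∈ chains K p)
    (hγ : cmap (contr a b) w = 0) :
    ∃ u ∈ chains K (p + 1), cmap (contr a b) u = 0 ∧
      ∀ τ, a ∉ τ → b ∉ τ → bnd u (insert b τ) = w (insert b τ) := by
  have hsupp := mem_chains_iff.1 hw
  set B := w.support.filter fun σ => b ∈ σ ∧ a ∉ σ
  have hface : ∀ σ ∈ B, insert a σ ∈ K.faces ∧ (insert a σ).card = p + 2 := by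
    intro σ hσ
    obtain ⟨hσw, hbσ, haσ⟩ := Finset.mem_filter.1 hσ
    obtain ⟨hσK, hc⟩ := hsupp σ hσw
    obtain ⟨τ, hbτ, rfl⟩ := exists_eq_insert_of_mem hbσ
    have haτ : a ∉ τ := fun h => haσ (Finset.mem_insert_of_mem h)
    have hmirror := hsupp _ (Finsupp.mem_support_iff.2 <|
      apply_insert_ne_zero_of_cmap_contr_eq_zero hne hγ haτ hbτ (Finsupp.mem_support_iff.1 hσw))
    rw [Finset.card_insert_of_notMem hbτ] at hc
    refine ⟨insert_insert_mem_of_pLink hab hpl (by omega) haτ hbτ hmirror.1 hσK, ?_⟩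
    rw [Finset.card_insert_of_notMem haσ, Finset.card_insert_of_notMem hbτ, hc]
  refine ⟨∑ σ ∈ B, (w σ * posSign σ a) • Finsupp.single (insert a σ) 1, ?_, ?_, ?_⟩
  · exact Submodule.sum_mem _ fun σ hσ =>
      Submodule.smul_mem _ _ (single_mem_chains (hface σ hσ).1 (hface σ hσ).2 1)
  · rw [map_sum]
    refine Finset.sum_eq_zero fun σ hσ => ?_
    rw [map_smul, cmap_single, cmapOf_contr_of_mem_of_mem hne (Finset.mem_insert_self _ _)
      (Finset.mem_insert_of_mem (Finset.mem_filter.1 hσ).2.1), smul_zero, smul_zero]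
  · intro τ haτ hbτ
    have haσ : a ∉ insert b τ := by simp [hne, haτ]
    rw [bnd_sum_insert_apply (fun σ hσ => ⟨(Finset.mem_filter.1 hσ).2.2,
      K.nonempty_of_mem σ (hsupp σ (Finset.mem_filter.1 hσ).1).1⟩) _ haσ]
    split_ifs with h
    · rfl
    · by_contra hw0
      exact h (Finset.mem_filter.2 ⟨Finsupp.mem_support_iff.2 (Ne.symm hw0),
        Finset.mem_insert_self _ _, haσ⟩)

theorem mem_bdries_of_cmap_contr_eq_zero (hne : a ≠ b) (hab : ({a, b} : Finset V) ∈ K.faces)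
    {p : ℕ} (hpl : PLink K a b p) {w : FChain V} (hw : w ∈ cycles K p)
    (hγ : cmap (contr a b) w = 0) : w ∈ bdries K p := by
  obtain ⟨u, hu, hγu, hbu⟩ := exists_bnd_eq_of_cmap_contr_eq_zero hne hab hpl hw.1 hγ
  suffices w - bnd u = 0 from ⟨u, hu, (sub_eq_zero.1 this).symm⟩
  have hγr : cmap (contr a b) (w - bnd u) = 0 := by
    rw [map_sub, hγ, ← bnd_cmap_contr hne, hγu, map_zero, sub_zero]
  refine eq_zero_of_bnd_eq_zero (a := a) (fun σ hσ => ?_) ?_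
  · have hσab : a ∈ σ ∧ b ∈ σ := by
      by_contra h
      refine Finsupp.mem_support_iff.1 hσ (apply_eq_zero_of_cmap_contr_eq_zero hne hγr
        (fun τ ha hb => ?_) h)
      rw [Finsupp.sub_apply, hbu τ ha hb, sub_self]
    exact ⟨hσab.1, Finset.one_lt_card.2 ⟨a, hσab.1, b, hσab.2, hne⟩⟩
  · rw [map_sub, bnd_bnd, LinearMap.mem_ker.1 hw.2, sub_zero]

theorem mem_bdries_of_cmap_contr_mem_bdries (hne : a ≠ b)
    (hab : ({a, b} : Finset V) ∈ K.faces)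
    (hK' : K'.faces = K.faces.image (Finset.image (contr a b))) {p : ℕ}
    (hpl : PLink K a b p) {z : FChain V} (hz : z ∈ cycles K p)
    (hγz : cmap (contr a b) z ∈ bdries K' p) : z ∈ bdries K p := by
  obtain ⟨c', hc', hbc'⟩ := hγz
  rw [← map_cmap_contr_chains hne hK'] at hc'
  obtain ⟨c, hc, rfl⟩ := hc'
  have hw : z - bnd c ∈ cycles K p :=
    ⟨sub_mem hz.1 (bdries_le_chains p ⟨c, hc, rfl⟩), by
      rw [SetLike.mem_coe, LinearMap.mem_ker, map_sub, LinearMap.mem_ker.1 hz.2, bnd_bnd,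
        sub_zero]⟩
  have hγw : cmap (contr a b) (z - bnd c) = 0 := by
    rw [map_sub, ← bnd_cmap_contr hne, hbc', sub_self]
  simpa using add_mem (mem_bdries_of_cmap_contr_eq_zero hne hab hpl hw hγw) ⟨c, hc, rfl⟩

end Homology

/-- if the edge `ab` satisfies the `p`-link condition, the homomorphism
induced on `p`-th homology by the edge contraction of `ab` is injective. -/
theorem statement2 (K K' : SC V) (a b : V) (hne : a ≠ b)
    (hab : ({a, b} : Finset V) ∈ K.faces)
    (hK' : K'.faces = K.faces.image (Finset.image (contr a b)))
    (p : ℕ) (hpl : PLink K a b (p : ℤ))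
    (φ : Hmlgy K p →ₗ[ℤ] Hmlgy K' p)
    (hφ : ∀ (z : FChain V) (hz : z ∈ cycles K p)
        (hz' : cmap (contr a b) z ∈ cycles K' p),
      φ (HmlgyMk K p z hz) = HmlgyMk K' p (cmap (contr a b) z) hz') :
    Function.Injective φ := by
  refine (injective_iff_map_eq_zero φ).2 fun x hx => ?_
  obtain ⟨⟨z, hz⟩, rfl⟩ := Submodule.Quotient.mk_surjective _ x
  have hz' := cmap_contr_mem_cycles hne hK' hz
  have h0 : HmlgyMk K' p _ hz' = 0 := (hφ z hz hz').symm.trans hx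
  rw [HmlgyMk, Submodule.Quotient.mk_eq_zero] at h0
  exact (Submodule.Quotient.mk_eq_zero _).2
    (mem_bdries_of_cmap_contr_mem_bdries hne hab hK' hpl hz h0)

end ECpaper
end

section
/- Let γ_{ab}: K → K' be an edge contraction of a finite simplicial complex K. Let L' ⊆ K' be a subcomplex of dimension p+1 containing the vertex a, and let L_0' ⊂ L' be a subcomplex of dimension p. Then there exist subcomplexes L ⊆ K of dimension p+1 and L_0 ⊂ L of dimension p with γ_{ab}(L, L_0) = (L', L_0') such that, for each i ∈ {p-1, p-2}, if ab satisfies the i-link condition in K then ab satisfies the i-link condition in L_0. -/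
namespace ECpaper

variable {V : Type*} [LinearOrder V]

-- auxiliary lemmas

lemma contr_apply_ne {a b v : V} (h : v ≠ b) : contr a b v = v := if_neg h

lemma contr_apply_b (a b : V) : contr a b b = a := if_pos rfl

lemma image_contr_of_not_mem {a b : V} {τ : Finset V} (h : b ∉ τ) :
    τ.image (contr a b) = τ := by
  have he : ∀ v ∈ τ, contr a b v = id v := fun v hv =>
    contr_apply_ne (fun hvb => h (hvb ▸ hv))
  rw [Finset.image_congr he, Finset.image_id]

lemma image_contr_erase_b {a b : V} (hne : a ≠ b) {σ : Finset V} (ha : a ∈ σ) :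
    (σ.erase b).image (contr a b) = σ.image (contr a b) := by
  by_cases hb : b ∈ σ
  · conv_rhs => rw [← Finset.insert_erase hb]
    rw [Finset.image_insert, contr_apply_b]
    refine (Finset.insert_eq_self.2 ?_).symm
    exact Finset.mem_image.2 ⟨a, Finset.mem_erase.2 ⟨hne, ha⟩, contr_apply_ne hne⟩
  · rw [Finset.erase_eq_of_notMem hb]

lemma mem_linkV_iff (L : SC V) (a : V) (ξ : Finset V) :
    ξ ∈ linkV L a ↔ ξ ∈ L.faces ∧ a ∉ ξ ∧ insert a ξ ∈ L.faces := by
  simp only [linkV, linkOf, Set.mem_diff, closureOf, starOf, Set.mem_setOf_eq,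
    Set.mem_singleton_iff]
  constructor
  · rintro ⟨⟨hξL, σ, ⟨hσL, ρ, hρ, hρσ⟩, hξσ⟩, hns⟩
    subst hρ
    have haσ : a ∈ σ := hρσ (Finset.mem_singleton_self a)
    have haL : ({a} : Finset V) ∈ L.faces :=
      L.down_closed σ hσL {a} (Finset.singleton_subset_iff.2 haσ)
        ⟨a, Finset.mem_singleton_self a⟩
    have haξ : a ∉ ξ := fun haξ =>
      hns ⟨hξL, {a}, ⟨haL, {a}, rfl, le_refl _⟩, Finset.singleton_subset_iff.2 haξ⟩
    exact ⟨hξL, haξ, L.down_closed σ hσL _ (Finset.insert_subset haσ hξσ)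
      ⟨a, Finset.mem_insert_self a ξ⟩⟩
  · rintro ⟨hξL, haξ, hins⟩
    refine ⟨⟨hξL, insert a ξ, ⟨hins, {a}, rfl,
      Finset.singleton_subset_iff.2 (Finset.mem_insert_self a ξ)⟩,
      Finset.subset_insert a ξ⟩, ?_⟩
    rintro ⟨-, τ, ⟨hτL, ρ, hρ, hτρ⟩, hτξ⟩
    subst hρ
    obtain ⟨v, hv⟩ := L.nonempty_of_mem τ hτL
    have hva := Finset.mem_singleton.1 (hτρ hv)
    exact haξ (hva ▸ hτξ hv)

lemma mem_linkE_iff (L : SC V) (a b : V) (ξ : Finset V) :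
    ξ ∈ linkE L a b ↔ ξ ∈ L.faces ∧ a ∉ ξ ∧ b ∉ ξ ∧ insert a (insert b ξ) ∈ L.faces := by
  simp only [linkE, linkOf, Set.mem_diff, closureOf, starOf, Set.mem_setOf_eq,
    Set.mem_singleton_iff]
  constructor
  · rintro ⟨⟨hξL, σ, ⟨hσL, ρ, hρ, hρσ⟩, hξσ⟩, hns⟩
    subst hρ
    have haσ : a ∈ σ := hρσ (by simp)
    have hbσ : b ∈ σ := hρσ (by simp)
    have haξ : a ∉ ξ := by
      intro haξ
      refine hns ⟨hξL, {a}, ⟨?_, {a, b}, rfl, by simp⟩, Finset.singleton_subset_iff.2 haξ⟩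
      exact L.down_closed σ hσL {a} (Finset.singleton_subset_iff.2 haσ) ⟨a, by simp⟩
    have hbξ : b ∉ ξ := by
      intro hbξ
      refine hns ⟨hξL, {b}, ⟨?_, {a, b}, rfl, by simp⟩, Finset.singleton_subset_iff.2 hbξ⟩
      exact L.down_closed σ hσL {b} (Finset.singleton_subset_iff.2 hbσ) ⟨b, by simp⟩
    refine ⟨hξL, haξ, hbξ, L.down_closed σ hσL (insert a (insert b ξ)) ?_ ⟨a, Finset.mem_insert_self a _⟩⟩
    exact Finset.insert_subset haσ (Finset.insert_subset hbσ hξσ)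
  · rintro ⟨hξL, haξ, hbξ, hins⟩
    refine ⟨⟨hξL, insert a (insert b ξ), ⟨hins, {a, b}, rfl, ?_⟩, ?_⟩, ?_⟩
    · intro v hv
      rcases Finset.mem_insert.1 hv with h | h
      · rw [h]; exact Finset.mem_insert_self a _
      · rw [Finset.mem_singleton.1 h]
        exact Finset.mem_insert.2 (Or.inr (Finset.mem_insert_self b ξ))
    · exact (Finset.subset_insert b ξ).trans (Finset.subset_insert a _)
    · rintro ⟨-, τ, ⟨hτL, ρ, hρ, hτρ⟩, hτξ⟩
      subst hρ
      obtain ⟨v, hv⟩ := L.nonempty_of_mem τ hτL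
      rcases Finset.mem_insert.1 (hτρ hv) with h | h
      · exact haξ (h ▸ hτξ hv)
      · exact hbξ ((Finset.mem_singleton.1 h) ▸ hτξ hv)

def dcl (S : Finset (Finset V)) : Finset (Finset V) :=
  S.biUnion fun σ => σ.powerset.filter Finset.Nonempty

lemma mem_dcl {S : Finset (Finset V)} {τ : Finset V} :
    τ ∈ dcl S ↔ ∃ σ ∈ S, τ ⊆ σ ∧ τ.Nonempty := by
  simp [dcl, and_assoc]

def scOf (S : Finset (Finset V)) : SC V where
  faces := dcl S
  nonempty_of_mem := fun σ h => (mem_dcl.1 h).choose_spec.2.2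
  down_closed := fun σ h τ hτ hne => by
    obtain ⟨ρ, hρ, hσρ, -⟩ := mem_dcl.1 h
    exact mem_dcl.2 ⟨ρ, hρ, hτ.trans hσρ, hne⟩

lemma scOf_faces (S : Finset (Finset V)) : (scOf S).faces = dcl S := rfl



/-- for any pair `(L', L0')` of subcomplexes of `K'` of dimensions `p+1`
and `p` with `a ∈ L'`, there is a pair `(L, L0)` of subcomplexes of `K` of dimensions
`p+1` and `p` mapping onto `(L', L0')` under the contraction of `ab`, such that for
`i ∈ {p-1, p-2}` the `i`-link condition in `K` implies the `i`-link condition in `L0`. -/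
theorem statement10 (K K' L' L0' : SC V) (a b : V) (hne : a ≠ b)
    (hab : ({a, b} : Finset V) ∈ K.faces)
    (hK' : K'.faces = K.faces.image (Finset.image (contr a b)))
    (p : ℕ)
    (hL'K' : L'.faces ⊆ K'.faces) (hL0'L' : L0'.faces ⊆ L'.faces)
    (hdimL' : dimSC L' = (p : ℤ) + 1) (hdimL0' : dimSC L0' = (p : ℤ))
    (haL' : ({a} : Finset V) ∈ L'.faces) :
    ∃ L L0 : SC V, L.faces ⊆ K.faces ∧ L0.faces ⊆ L.faces ∧
      dimSC L = (p : ℤ) + 1 ∧ dimSC L0 = (p : ℤ) ∧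
      L'.faces = L.faces.image (Finset.image (contr a b)) ∧
      L0'.faces = L0.faces.image (Finset.image (contr a b)) ∧
      ∀ i : ℤ, (i = (p : ℤ) - 1 ∨ i = (p : ℤ) - 2) →
        PLink K a b i → PLink L0 a b i := by
  classical
  have hL0'K' : L0'.faces ⊆ K'.faces := fun x hx => hL'K' (hL0'L' hx)
  -- existence of good lifts
  have hliftex : ∀ σ' : Finset V, ∃ σ, σ' ∈ K'.faces →
      σ ∈ K.faces ∧ σ.image (contr a b) = σ' ∧ σ.card = σ'.card := by
    intro σ'
    by_cases hσ' : σ' ∈ K'.faces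
    · rw [hK', Finset.mem_image] at hσ'
      obtain ⟨σ, hσK, hσim⟩ := hσ'
      by_cases hb : b ∈ σ
      · by_cases ha : a ∈ σ
        · refine ⟨σ.erase b, fun _ => ⟨?_, ?_, ?_⟩⟩
          · exact K.down_closed σ hσK _ (Finset.erase_subset b σ)
              ⟨a, Finset.mem_erase.2 ⟨hne, ha⟩⟩
          · rw [image_contr_erase_b hne ha, hσim]
          · have h1 : (σ.erase b).image (contr a b) = σ.erase b :=
              image_contr_of_not_mem (Finset.notMem_erase b σ)
            rw [← hσim, ← image_contr_erase_b hne ha, h1]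
        · refine ⟨σ, fun _ => ⟨hσK, hσim, ?_⟩⟩
          rw [← hσim]
          refine (Finset.card_image_of_injOn ?_).symm
          intro u hu v hv huv
          by_cases hub : u = b
          · by_cases hvb : v = b
            · rw [hub, hvb]
            · rw [hub, contr_apply_b, contr_apply_ne hvb] at huv
              exact absurd (huv ▸ hv) ha
          · by_cases hvb : v = b
            · rw [hvb, contr_apply_b, contr_apply_ne hub] at huv
              exact absurd (huv ▸ hu) ha
            · rwa [contr_apply_ne hub, contr_apply_ne hvb] at huv
      · exact ⟨σ, fun _ => ⟨hσK, hσim, by rw [← hσim, image_contr_of_not_mem hb]⟩⟩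
    · exact ⟨∅, fun h => absurd h hσ'⟩
  choose lift hlift using hliftex
  have hliftK : ∀ σ' ∈ K'.faces, lift σ' ∈ K.faces := fun σ' h => (hlift σ' h).1
  have hliftim : ∀ σ' ∈ K'.faces, (lift σ').image (contr a b) = σ' := fun σ' h => (hlift σ' h).2.1
  have hliftcard : ∀ σ' ∈ K'.faces, (lift σ').card = σ'.card := fun σ' h => (hlift σ' h).2.2
  -- dimensions as sups
  have hsupL' : L'.faces.sup Finset.card = p + 2 := by
    have h := hdimL'; unfold dimSC at h; omega
  have hsupL0' : L0'.faces.sup Finset.card = p + 1 := by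
    have h := hdimL0'; unfold dimSC at h; omega
  -- the complexes
  set CC : Finset (Finset V) := dcl (L0'.faces.image lift) with hCCdef
  set A : Finset (Finset V) := K.faces.filter
    (fun τ => a ∈ τ ∧ b ∈ τ ∧ τ.card ≤ p + 1 ∧ τ.erase b ∈ CC ∧ τ.erase a ∈ CC) with hAdef
  set L0 : SC V := scOf (CC ∪ A) with hL0def
  set L : SC V := scOf (L'.faces.image lift ∪ (CC ∪ A)) with hLdef
  -- basic membership facts
  have mem_CC : ∀ τ, τ ∈ CC ↔ ∃ σ' ∈ L0'.faces, τ ⊆ lift σ' ∧ τ.Nonempty := by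
    intro τ
    rw [hCCdef, mem_dcl]
    constructor
    · rintro ⟨σ, hσ, h1, h2⟩
      obtain ⟨σ', hσ', rfl⟩ := Finset.mem_image.1 hσ
      exact ⟨σ', hσ', h1, h2⟩
    · rintro ⟨σ', hσ', h1, h2⟩
      exact ⟨lift σ', Finset.mem_image_of_mem lift hσ', h1, h2⟩
  have hCCK : ∀ τ ∈ CC, τ ∈ K.faces := by
    intro τ hτ
    obtain ⟨σ', hσ', h1, h2⟩ := (mem_CC τ).1 hτ
    exact K.down_closed _ (hliftK σ' (hL0'K' hσ')) τ h1 h2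
  have hCCcard : ∀ τ ∈ CC, τ.card ≤ p + 1 := by
    intro τ hτ
    obtain ⟨σ', hσ', h1, -⟩ := (mem_CC τ).1 hτ
    calc τ.card ≤ (lift σ').card := Finset.card_le_card h1
    _ = σ'.card := hliftcard σ' (hL0'K' hσ')
    _ ≤ L0'.faces.sup Finset.card := Finset.le_sup hσ'
    _ = p + 1 := hsupL0'
  have hCCim : ∀ τ ∈ CC, τ.image (contr a b) ∈ L0'.faces := by
    intro τ hτ
    obtain ⟨σ', hσ', h1, h2⟩ := (mem_CC τ).1 hτ
    have := Finset.image_subset_image (f := contr a b) h1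
    rw [hliftim σ' (hL0'K' hσ')] at this
    exact L0'.down_closed σ' hσ' _ this (h2.image _)
  have hAK : ∀ τ ∈ A, τ ∈ K.faces := fun τ hτ => (Finset.mem_filter.1 hτ).1
  have hAspec : ∀ τ ∈ A, a ∈ τ ∧ b ∈ τ ∧ τ.card ≤ p + 1 ∧ τ.erase b ∈ CC ∧ τ.erase a ∈ CC :=
    fun τ hτ => (Finset.mem_filter.1 hτ).2
  have hAim : ∀ τ ∈ A, τ.image (contr a b) ∈ L0'.faces := by
    intro τ hτ
    obtain ⟨ha', hb', -, heb, -⟩ := hAspec τ hτ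
    rw [← image_contr_erase_b hne ha']
    exact hCCim _ heb
  -- union facts
  have hUK : ∀ ρ ∈ CC ∪ A, ρ ∈ K.faces := by
    intro ρ hρ
    rcases Finset.mem_union.1 hρ with h | h
    · exact hCCK ρ h
    · exact hAK ρ h
  have hUcard : ∀ ρ ∈ CC ∪ A, ρ.card ≤ p + 1 := by
    intro ρ hρ
    rcases Finset.mem_union.1 hρ with h | h
    · exact hCCcard ρ h
    · exact (hAspec ρ h).2.2.1
  have hUim : ∀ ρ ∈ CC ∪ A, ρ.image (contr a b) ∈ L0'.faces := by
    intro ρ hρ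
    rcases Finset.mem_union.1 hρ with h | h
    · exact hCCim ρ h
    · exact hAim ρ h
  -- facts about the big union for L
  have hWK : ∀ ρ ∈ L'.faces.image lift ∪ (CC ∪ A), ρ ∈ K.faces := by
    intro ρ hρ
    rcases Finset.mem_union.1 hρ with h | h
    · obtain ⟨σ', hσ', rfl⟩ := Finset.mem_image.1 h
      exact hliftK σ' (hL'K' hσ')
    · exact hUK ρ h
  have hWcard : ∀ ρ ∈ L'.faces.image lift ∪ (CC ∪ A), ρ.card ≤ p + 2 := by
    intro ρ hρ
    rcases Finset.mem_union.1 hρ with h | h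
    · obtain ⟨σ', hσ', rfl⟩ := Finset.mem_image.1 h
      calc (lift σ').card = σ'.card := hliftcard σ' (hL'K' hσ')
      _ ≤ L'.faces.sup Finset.card := Finset.le_sup hσ'
      _ = p + 2 := hsupL'
    · exact (hUcard ρ h).trans (by omega)
  have hWim : ∀ ρ ∈ L'.faces.image lift ∪ (CC ∪ A), ρ.image (contr a b) ∈ L'.faces := by
    intro ρ hρ
    rcases Finset.mem_union.1 hρ with h | h
    · obtain ⟨σ', hσ', rfl⟩ := Finset.mem_image.1 h
      rw [hliftim σ' (hL'K' hσ')]; exact hσ'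
    · exact hL0'L' (hUim ρ h)
  refine ⟨L, L0, ?_, ?_, ?_, ?_, ?_, ?_, ?_⟩
  · -- L.faces ⊆ K.faces
    intro τ hτ
    rw [hLdef, scOf_faces, mem_dcl] at hτ
    obtain ⟨ρ, hρ, h1, h2⟩ := hτ
    exact K.down_closed ρ (hWK ρ hρ) τ h1 h2
  · -- L0.faces ⊆ L.faces
    intro τ hτ
    rw [hL0def, scOf_faces, mem_dcl] at hτ
    rw [hLdef, scOf_faces, mem_dcl]
    obtain ⟨ρ, hρ, h1, h2⟩ := hτ
    exact ⟨ρ, Finset.mem_union_right _ hρ, h1, h2⟩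
  · -- dim L
    have hle : L.faces.sup Finset.card ≤ p + 2 := by
      refine Finset.sup_le ?_
      intro τ hτ
      rw [hLdef, scOf_faces, mem_dcl] at hτ
      obtain ⟨ρ, hρ, h1, -⟩ := hτ
      exact (Finset.card_le_card h1).trans (hWcard ρ hρ)
    have hLne : L'.faces.Nonempty := by
      rcases Finset.eq_empty_or_nonempty L'.faces with h | h
      · rw [h] at hsupL'; simp at hsupL'
      · exact h
    obtain ⟨σ', hσ', htop⟩ := Finset.exists_mem_eq_sup L'.faces hLne Finset.card
    have hc : (lift σ').card = p + 2 := by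
      rw [hliftcard σ' (hL'K' hσ'), ← htop, hsupL']
    have hmem : lift σ' ∈ L.faces := by
      rw [hLdef, scOf_faces, mem_dcl]
      exact ⟨lift σ', Finset.mem_union_left _ (Finset.mem_image_of_mem lift hσ'),
        Finset.Subset.refl _, Finset.card_pos.1 (by omega)⟩
    have hge : p + 2 ≤ L.faces.sup Finset.card := hc ▸ Finset.le_sup hmem
    unfold dimSC
    have : L.faces.sup Finset.card = p + 2 := le_antisymm hle hge
    rw [this]; push_cast; ring
  · -- dim L0
    have hle : L0.faces.sup Finset.card ≤ p + 1 := by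
      refine Finset.sup_le ?_
      intro τ hτ
      rw [hL0def, scOf_faces, mem_dcl] at hτ
      obtain ⟨ρ, hρ, h1, -⟩ := hτ
      exact (Finset.card_le_card h1).trans (hUcard ρ hρ)
    have hL0ne : L0'.faces.Nonempty := by
      rcases Finset.eq_empty_or_nonempty L0'.faces with h | h
      · rw [h] at hsupL0'; simp at hsupL0'
      · exact h
    obtain ⟨σ', hσ', htop⟩ := Finset.exists_mem_eq_sup L0'.faces hL0ne Finset.card
    have hc : (lift σ').card = p + 1 := by
      rw [hliftcard σ' (hL0'K' hσ'), ← htop, hsupL0']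
    have hmem : lift σ' ∈ L0.faces := by
      rw [hL0def, scOf_faces, mem_dcl]
      refine ⟨lift σ', Finset.mem_union_left _ ?_, Finset.Subset.refl _,
        Finset.card_pos.1 (by omega)⟩
      exact (mem_CC _).2 ⟨σ', hσ', Finset.Subset.refl _, Finset.card_pos.1 (by omega)⟩
    have hge : p + 1 ≤ L0.faces.sup Finset.card := hc ▸ Finset.le_sup hmem
    unfold dimSC
    have : L0.faces.sup Finset.card = p + 1 := le_antisymm hle hge
    rw [this]; push_cast; ring
  · -- L' = image of L
    refine Finset.Subset.antisymm ?_ ?_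
    · intro σ' hσ'
      refine Finset.mem_image.2 ⟨lift σ', ?_, hliftim σ' (hL'K' hσ')⟩
      rw [hLdef, scOf_faces, mem_dcl]
      refine ⟨lift σ', Finset.mem_union_left _ (Finset.mem_image_of_mem lift hσ'),
        Finset.Subset.refl _, ?_⟩
      have h1 := hliftcard σ' (hL'K' hσ')
      have h2 := (L'.nonempty_of_mem σ' hσ').card_pos
      exact Finset.card_pos.1 (by omega)
    · intro x hx
      obtain ⟨τ, hτ, rfl⟩ := Finset.mem_image.1 hx
      rw [hLdef, scOf_faces, mem_dcl] at hτ
      obtain ⟨ρ, hρ, h1, h2⟩ := hτ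
      have him := hWim ρ hρ
      refine L'.down_closed _ him _ (Finset.image_subset_image h1) (h2.image _)
  · -- L0' = image of L0
    refine Finset.Subset.antisymm ?_ ?_
    · intro σ' hσ'
      refine Finset.mem_image.2 ⟨lift σ', ?_, hliftim σ' (hL0'K' hσ')⟩
      rw [hL0def, scOf_faces, mem_dcl]
      have h1 := hliftcard σ' (hL0'K' hσ')
      have h2 := (L0'.nonempty_of_mem σ' hσ').card_pos
      refine ⟨lift σ', Finset.mem_union_left _ ?_, Finset.Subset.refl _,
        Finset.card_pos.1 (by omega)⟩
      exact (mem_CC _).2 ⟨σ', hσ', Finset.Subset.refl _, Finset.card_pos.1 (by omega)⟩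
    · intro x hx
      obtain ⟨τ, hτ, rfl⟩ := Finset.mem_image.1 hx
      rw [hL0def, scOf_faces, mem_dcl] at hτ
      obtain ⟨ρ, hρ, h1, h2⟩ := hτ
      have him := hUim ρ hρ
      exact L0'.down_closed _ him _ (Finset.image_subset_image h1) (h2.image _)
  · -- PLink transfer
    intro i hi hPK
    rcases le_or_gt i 0 with h0 | h0
    · exact Or.inl h0
    refine Or.inr ⟨h0, ?_⟩
    intro ξ hξ hcard
    obtain ⟨hξa, hξb⟩ := hξ
    rw [mem_linkV_iff] at hξa hξb
    obtain ⟨hξ0, haξ, hinsa⟩ := hξa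
    obtain ⟨-, hbξ, hinsb⟩ := hξb
    have hξne : ξ.Nonempty := Finset.card_pos.1 (by omega)
    rw [mem_linkE_iff]
    refine ⟨hξ0, haξ, hbξ, ?_⟩
    rw [hL0def, scOf_faces, mem_dcl] at hinsa hinsb ⊢
    obtain ⟨ρa, hρa, hsa, -⟩ := hinsa
    obtain ⟨ρb, hρb, hsb, -⟩ := hinsb
    have habne : (insert a (insert b ξ)).Nonempty := ⟨a, Finset.mem_insert_self a _⟩
    rcases Finset.mem_union.1 hρa with hρaC | hρaA
    · rcases Finset.mem_union.1 hρb with hρbC | hρbA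
      · -- both in CC: use the link condition in K
        have hinsaCC : insert a ξ ∈ CC := by
          obtain ⟨σ', hσ', h1, -⟩ := (mem_CC ρa).1 hρaC
          exact (mem_CC _).2 ⟨σ', hσ', hsa.trans h1, ⟨a, Finset.mem_insert_self a _⟩⟩
        have hinsbCC : insert b ξ ∈ CC := by
          obtain ⟨σ', hσ', h1, -⟩ := (mem_CC ρb).1 hρbC
          exact (mem_CC _).2 ⟨σ', hσ', hsb.trans h1, ⟨b, Finset.mem_insert_self b _⟩⟩
        have hinsaK : insert a ξ ∈ K.faces := hCCK _ hinsaCC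
        have hinsbK : insert b ξ ∈ K.faces := hCCK _ hinsbCC
        have hξK : ξ ∈ K.faces :=
          K.down_closed _ hinsaK ξ (Finset.subset_insert a ξ) hξne
        have hlk : ξ ∈ linkV K a ∩ linkV K b :=
          ⟨(mem_linkV_iff K a ξ).2 ⟨hξK, haξ, hinsaK⟩,
           (mem_linkV_iff K b ξ).2 ⟨hξK, hbξ, hinsbK⟩⟩
        rcases hPK with h | ⟨-, hP⟩
        · omega
        have hE := hP ξ hlk hcard
        rw [mem_linkE_iff] at hE
        obtain ⟨-, -, -, hbig⟩ := hE
        have hanb : a ∉ insert b ξ := by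
          simp only [Finset.mem_insert]
          rintro (h | h)
          · exact hne h
          · exact haξ h
        have hcardbig : (insert a (insert b ξ)).card = ξ.card + 2 := by
          rw [Finset.card_insert_of_notMem hanb, Finset.card_insert_of_notMem hbξ]
        have hle : (insert a (insert b ξ)).card ≤ p + 1 := by
          rcases hi with h1 | h1 <;> omega
        have herb : (insert a (insert b ξ)).erase b = insert a ξ := by
          rw [Finset.erase_insert_of_ne hne, Finset.erase_insert hbξ]
        have hera : (insert a (insert b ξ)).erase a = insert b ξ := by
          rw [Finset.insert_comm a b ξ, Finset.erase_insert_of_ne hne.symm,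
            Finset.erase_insert haξ]
        have hbigA : insert a (insert b ξ) ∈ A := by
          rw [hAdef, Finset.mem_filter]
          exact ⟨hbig, Finset.mem_insert_self a _,
            Finset.mem_insert.2 (Or.inr (Finset.mem_insert_self b _)), hle,
            by rw [herb]; exact hinsaCC, by rw [hera]; exact hinsbCC⟩
        exact ⟨_, Finset.mem_union_right _ hbigA, Finset.Subset.refl _, habne⟩
      · -- ρb ∈ A: a ∈ ρb already
        have haρ : a ∈ ρb := (hAspec ρb hρbA).1
        exact ⟨ρb, Finset.mem_union_right _ hρbA,
          Finset.insert_subset haρ hsb, habne⟩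
    · -- ρa ∈ A: b ∈ ρa already
      have hbρ : b ∈ ρa := (hAspec ρa hρaA).2.1
      have hsub : insert a (insert b ξ) ⊆ ρa := by
        refine Finset.insert_subset (hsa (Finset.mem_insert_self a ξ)) ?_
        exact Finset.insert_subset hbρ ((Finset.subset_insert a ξ).trans hsa)
      exact ⟨ρa, Finset.mem_union_right _ hρaA, hsub, habne⟩


end ECpaper
end
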